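/- arXiv:1209.6284 — 2 statements merged into one kernel-verified Lean document; each statement's English description precedes it below -/
import Mathlib

section
/- Let n ≥ 0 and 1 ≤ a < 2^(n+1). Let J = { j : 1 ≤ j ≤ 2^n, s₂(2^(n+1)+a−j) + s₂(j) = s₂(2^(n+1)+a) }. Then |J| = 2^{s₂(a)} − 1 if 1 ≤ a ≤ 2^n, and |J| = 2^{s₂(a)−1} if 2^n < a < 2^(n+1). -/
/-!
By Kummer's theorem, `s₂ (N - j) + s₂ j = s₂ N` holds exactly when `N.choose j` is odd, and for
`N = 2 ^ (n + 1) + a` and `j < 2 ^ (n + 1)` Lucas's theorem reduces this to `a.choose j` being odd.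
By Glaisher's theorem row `a` of Pascal's triangle has `2 ^ s₂ a` odd entries, all at `j ≤ a`;
discarding `j = 0` gives the first case. If `a = 2 ^ n + b` with `b < 2 ^ n`, the odd entries
with `j ≤ 2 ^ n` are those of row `b` together with `j = 2 ^ n`, so there are
`2 ^ s₂ b = 2 ^ (s₂ a - 1)` of them once `j = 0` is discarded.
-/

/-- Stirling numbers of the second kind. -/
def S : ℕ → ℕ → ℕ
  | 0, 0 => 1
  | 0, _ + 1 => 0
  | _ + 1, 0 => 0
  | n + 1, k + 1 => S n k + (k + 1) * S n (k + 1)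

/-- Sum of binary digits. -/
def s₂ (n : ℕ) : ℕ := (Nat.digits 2 n).sum

open Finset

lemma s₂_eq_mod_two_add_s₂_div_two (n : ℕ) : s₂ n = n % 2 + s₂ (n / 2) := by
  rcases n.eq_zero_or_pos with rfl | hn
  · simp [s₂]
  · simp [s₂, Nat.digits_def' one_lt_two hn]

lemma s₂_two_pow (k : ℕ) : s₂ (2 ^ k) = 1 := by
  rw [s₂, ← mul_one (2 ^ k), Nat.digits_base_pow_mul one_lt_two one_pos]
  simp

/-- Kummer's theorem for `p = 2`, via Legendre's formula `v₂ (n!) = n - s₂ n`. -/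
lemma s₂_add_add_padicValNat_choose (m k : ℕ) :
    s₂ (m + k) + padicValNat 2 ((m + k).choose k) = s₂ m + s₂ k := by
  have legendre (n : ℕ) : padicValNat 2 n.factorial + s₂ n = n := by
    have := sub_one_mul_padicValNat_factorial (p := 2) n
    have := Nat.digit_sum_le 2 n
    simp only [s₂]; omega
  have hchoose : (m + k).choose k ≠ 0 := (Nat.choose_pos (Nat.le_add_left k m)).ne'
  have hfac := congrArg (padicValNat 2) (Nat.add_choose_mul_factorial_mul_factorial m k)
  rw [padicValNat.mul (mul_ne_zero hchoose m.factorial_ne_zero) k.factorial_ne_zero,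
    padicValNat.mul hchoose m.factorial_ne_zero] at hfac
  have := legendre (m + k); have := legendre m; have := legendre k
  omega

lemma s₂_sub_add_s₂_eq_iff_odd_choose {n k : ℕ} (hk : k ≤ n) :
    s₂ (n - k) + s₂ k = s₂ n ↔ Odd (n.choose k) := by
  have hc := s₂_add_add_padicValNat_choose (n - k) k
  rw [Nat.sub_add_cancel hk] at hc
  rw [← hc, Nat.odd_iff, ← Nat.two_dvd_ne_zero]
  simp [padicValNat.eq_zero_iff, (Nat.choose_pos hk).ne']

/-- Lucas's theorem modulo `2`, one binary digit at a time. -/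
lemma odd_choose_iff (n k : ℕ) :
    Odd (n.choose k) ↔ k % 2 ≤ n % 2 ∧ Odd ((n / 2).choose (k / 2)) := by
  rw [Nat.odd_iff, Choose.choose_modEq_choose_mod_mul_choose_div_nat (p := 2), ← Nat.odd_iff,
    Nat.odd_mul]
  rcases Nat.mod_two_eq_zero_or_one n with hn | hn <;>
    rcases Nat.mod_two_eq_zero_or_one k with hk | hk <;> simp [hn, hk]

lemma le_of_odd_choose {n k : ℕ} (h : Odd (n.choose k)) : k ≤ n := by
  by_contra! hlt
  simp [Nat.choose_eq_zero_of_lt hlt] at h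

lemma odd_choose_two_pow_mul_add_iff {m r s : ℕ} (hr : r < 2 ^ m) (hs : s < 2 ^ m) (c d : ℕ) :
    Odd ((2 ^ m * c + r).choose (2 ^ m * d + s)) ↔ Odd (c.choose d) ∧ Odd (r.choose s) := by
  induction m generalizing r s with
  | zero =>
    obtain rfl : r = 0 := by simpa using hr
    obtain rfl : s = 0 := by simpa using hs
    simp
  | succ m ih =>
    rw [pow_succ] at hr hs ⊢
    have hn : 2 ^ m * 2 * c + r = 2 * (2 ^ m * c + r / 2) + r % 2 := by rw [mul_right_comm]; omega
    have hk : 2 ^ m * 2 * d + s = 2 * (2 ^ m * d + s / 2) + s % 2 := by rw [mul_right_comm]; omega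
    rw [hn, hk, odd_choose_iff, Nat.mul_add_mod_self_left, Nat.mul_add_mod_self_left,
      Nat.mul_add_div two_pos, Nat.mul_add_div two_pos, Nat.mod_div_self, Nat.mod_div_self,
      add_zero, add_zero, ih (by omega) (by omega), odd_choose_iff r s, Nat.mod_mod, Nat.mod_mod]
    tauto

lemma odd_choose_two_pow_add_iff {m r s : ℕ} (hr : r < 2 ^ m) (hs : s < 2 ^ m) :
    Odd ((2 ^ m + r).choose s) ↔ Odd (r.choose s) := by
  simpa using odd_choose_two_pow_mul_add_iff hr hs 1 0

lemma odd_choose_two_pow_add_two_pow {m r : ℕ} (hr : r < 2 ^ m) :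
    Odd ((2 ^ m + r).choose (2 ^ m)) := by
  simpa using odd_choose_two_pow_mul_add_iff hr (Nat.two_pow_pos m) 1 1

lemma s₂_two_pow_add {m r : ℕ} (hr : r < 2 ^ m) : s₂ (2 ^ m + r) = s₂ r + 1 := by
  have h := (s₂_sub_add_s₂_eq_iff_odd_choose (Nat.le_add_right _ r)).2
    (odd_choose_two_pow_add_two_pow hr)
  rwa [Nat.add_sub_cancel_left, s₂_two_pow, eq_comm] at h

lemma sum_range_two_mul {M : Type*} [AddCommMonoid M] (f : ℕ → M) (N : ℕ) :
    ∑ i ∈ range (2 * N), f i = ∑ i ∈ range N, (f (2 * i) + f (2 * i + 1)) := by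
  induction N with
  | zero => simp
  | succ N ih => rw [Nat.mul_succ, sum_range_succ, sum_range_succ, sum_range_succ, ih, add_assoc]

/-- Glaisher's theorem. -/
lemma card_filter_odd_choose_range_two_pow {m a : ℕ} (ha : a < 2 ^ m) :
    #{k ∈ range (2 ^ m) | Odd (a.choose k)} = 2 ^ s₂ a := by
  induction m generalizing a with
  | zero =>
    obtain rfl : a = 0 := by simpa using ha
    decide
  | succ m ih =>
    have hterm (k : ℕ) : ((if Odd (a.choose (2 * k)) then 1 else 0) +
        if Odd (a.choose (2 * k + 1)) then 1 else 0) =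
        2 ^ (a % 2) * if Odd ((a / 2).choose k) then 1 else 0 := by
      simp_rw [odd_choose_iff a]
      rcases Nat.mod_two_eq_zero_or_one a with h | h <;> simp [h, Nat.mul_add_div, apply_ite₂]
    rw [card_filter, pow_succ', sum_range_two_mul, sum_congr rfl fun k _ ↦ hterm k, ← mul_sum,
      ← card_filter, ih (by omega), s₂_eq_mod_two_add_s₂_div_two a, pow_add]

lemma card_filter_odd_choose_range {M a : ℕ} (ha : a < M) :
    #{k ∈ range M | Odd (a.choose k)} = 2 ^ s₂ a := by
  rw [← card_filter_odd_choose_range_two_pow (ha.trans M.lt_two_pow_self)]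
  congr 1
  ext k
  simp only [mem_filter, mem_range]
  have := M.lt_two_pow_self
  constructor <;> rintro ⟨-, hk⟩ <;> exact ⟨by have := le_of_odd_choose hk; omega, hk⟩

lemma card_filter_Icc_one_add_one {P : ℕ → Prop} [DecidablePred P] (h0 : P 0) (M : ℕ) :
    #{j ∈ Icc 1 M | P j} + 1 = #{j ∈ range (M + 1) | P j} := by
  rw [Nat.range_succ_eq_Icc_zero, ← insert_Icc_add_one_left_eq_Icc M.zero_le, filter_insert,
    if_pos h0, card_insert_of_notMem (by simp)]
  rfl

theorem stmt6_general (n a : ℕ) (ha : a < 2 ^ (n + 1)) :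
    ((Finset.Icc 1 (2 ^ n)).filter
        (fun j => s₂ (2 ^ (n + 1) + a - j) + s₂ j = s₂ (2 ^ (n + 1) + a))).card =
      if a ≤ 2 ^ n then 2 ^ s₂ a - 1 else 2 ^ (s₂ a - 1) := by
  have hcond (j : ℕ) (hj : j ∈ Icc 1 (2 ^ n)) :
      s₂ (2 ^ (n + 1) + a - j) + s₂ j = s₂ (2 ^ (n + 1) + a) ↔ Odd (a.choose j) := by
    rw [mem_Icc] at hj
    rw [s₂_sub_add_s₂_eq_iff_odd_choose (by omega),
      odd_choose_two_pow_add_iff ha (by rw [pow_succ]; omega)]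
  have hcard := card_filter_Icc_one_add_one (P := fun j ↦ Odd (a.choose j)) (by simp) (2 ^ n)
  rw [filter_congr hcond]
  split_ifs with hle
  · rw [card_filter_odd_choose_range (by omega)] at hcard
    omega
  · obtain ⟨b, rfl⟩ : ∃ b, a = 2 ^ n + b := ⟨a - 2 ^ n, by omega⟩
    have hb : b < 2 ^ n := by rw [pow_succ] at ha; omega
    rw [range_add_one, filter_insert, if_pos (odd_choose_two_pow_add_two_pow hb),
      card_insert_of_notMem (by simp), filter_congr fun j hj ↦ odd_choose_two_pow_add_iff hb
      (mem_range.1 hj), card_filter_odd_choose_range hb] at hcard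
    rw [s₂_two_pow_add hb, Nat.add_sub_cancel]
    omega

theorem stmt6 (n a : ℕ) (ha0 : 1 ≤ a) (ha : a < 2 ^ (n + 1)) :
    ((Finset.Icc 1 (2 ^ n)).filter
        (fun j => s₂ (2 ^ (n + 1) + a - j) + s₂ j = s₂ (2 ^ (n + 1) + a))).card =
      if a ≤ 2 ^ n then 2 ^ s₂ a - 1 else 2 ^ (s₂ a - 1) :=
  stmt6_general n a ha
end

section
/- Let n, a, c be positive integers with c odd and 1 ≤ a ≤ 2^n. Then s₂(c·2^n − a) = s₂(c) + n − ν₂(a) − s₂(a). -/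
namespace Nat

variable {b : ℕ}

theorem digits_sum_add_base_pow_mul (hb : 1 < b) {n r : ℕ} (hr : r < b ^ n) (q : ℕ) :
    (b.digits (r + b ^ n * q)).sum = (b.digits r).sum + (b.digits q).sum := by
  have hlen : (digitsAppend b n r).length = n := length_digitsAppend hb n hr
  have hval : ofDigits b (digitsAppend b n r ++ b.digits q) = r + b ^ n * q := by
    rw [ofDigits_append, hlen, digitsAppend, ofDigits_append_replicate_zero, ofDigits_digits,
      ofDigits_digits]
  have hdig : ∀ x ∈ digitsAppend b n r ++ b.digits q, x < b := by
    intro x hx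
    rcases List.mem_append.mp hx with hx | hx
    · exact lt_of_mem_digitsAppend hb n x hx
    · exact digits_lt_base hb hx
  rw [← hval, sum_digits_ofDigits_eq_sum hb (l := _) ⟨rfl, hdig⟩, List.sum_append,
    digitsAppend, List.sum_append, List.sum_replicate, smul_zero, add_zero]

theorem digits_sum_add_base_mul (hb : 1 < b) {d : ℕ} (hd : d < b) (q : ℕ) :
    (b.digits (d + b * q)).sum = d + (b.digits q).sum := by
  have hd_sum : (b.digits d).sum = d := by
    simpa using sum_digits_ofDigits_eq_sum hb (L := [d]) (l := 1) ⟨rfl, by simpa using hd⟩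
  have h := digits_sum_add_base_pow_mul hb (n := 1) (by rwa [pow_one]) q
  rwa [pow_one, hd_sum] at h

theorem digits_sum_base_pow_sub_one_sub_add (hb : 1 < b) :
    ∀ {n m : ℕ}, m < b ^ n → (b.digits (b ^ n - 1 - m)).sum + (b.digits m).sum = n * (b - 1)
  | 0, m, hm => by simp_all
  | n + 1, m, hm => by
    have hq : m / b < b ^ n := by
      rw [Nat.div_lt_iff_lt_mul (by omega), ← pow_succ]; exact hm
    have hd : m % b < b := mod_lt m (by omega)
    have hcompl_split : b ^ (n + 1) - 1 - m = (b - 1 - m % b) + b * (b ^ n - 1 - m / b) := by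
      have hle : b * (m / b + 1) ≤ b * b ^ n := Nat.mul_le_mul_left b hq
      have := mod_add_div m b
      rw [mul_add_one] at hle
      rw [pow_succ', Nat.mul_sub, Nat.mul_sub, mul_one]
      omega
    have hm_sum : (b.digits m).sum = m % b + (b.digits (m / b)).sum := by
      conv_lhs => rw [← mod_add_div m b]
      exact digits_sum_add_base_mul hb hd _
    rw [hcompl_split, digits_sum_add_base_mul hb (by omega), hm_sum, add_mul, one_mul]
    have := digits_sum_base_pow_sub_one_sub_add hb hq
    omega

variable {p : ℕ} [hp : Fact p.Prime]

theorem digits_sum_add_one_add_sub_one_mul_padicValNat (m : ℕ) :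
    (p.digits (m + 1)).sum + (p - 1) * padicValNat p (m + 1) = (p.digits m).sum + 1 := by
  have hm := sub_one_mul_padicValNat_factorial (p := p) m
  have hm1 := sub_one_mul_padicValNat_factorial (p := p) (m + 1)
  rw [factorial_succ, padicValNat.mul m.add_one_ne_zero (factorial_ne_zero m), mul_add] at hm1
  have := digit_sum_le p m
  have := digit_sum_le p (m + 1)
  omega

theorem digits_sum_base_pow_sub_add {n a : ℕ} (ha0 : 1 ≤ a) (ha : a ≤ p ^ n) :
    (p.digits (p ^ n - a)).sum + (p.digits a).sum + (p - 1) * padicValNat p a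
      = n * (p - 1) + 1 := by
  obtain ⟨m, rfl⟩ : ∃ m, a = m + 1 := ⟨a - 1, by omega⟩
  have hcompl := digits_sum_base_pow_sub_one_sub_add hp.out.one_lt (n := n) (m := m) (by omega)
  have hcarry := digits_sum_add_one_add_sub_one_mul_padicValNat (p := p) m
  rw [Nat.sub_sub, add_comm 1 m] at hcompl
  omega

end Nat

theorem stmt7_general (n a c : ℕ) (hodd : Odd c)
    (ha0 : 1 ≤ a) (ha : a ≤ 2 ^ n) :
    (s₂ (c * 2 ^ n - a) : ℤ) = s₂ c + n - padicValNat 2 a - s₂ a := by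
  obtain ⟨k, rfl⟩ := hodd
  have hsplit : (2 * k + 1) * 2 ^ n - a = (2 ^ n - a) + 2 ^ n * (2 * k) := by
    rw [add_one_mul, mul_comm]
    omega
  have hcarry := Nat.digits_sum_add_one_add_sub_one_mul_padicValNat (p := 2) (2 * k)
  rw [padicValNat.eq_zero_of_not_dvd (by omega), mul_zero, add_zero] at hcarry
  have hpow := Nat.digits_sum_base_pow_sub_add (p := 2) ha0 ha
  rw [hsplit]
  unfold s₂ at *
  rw [Nat.digits_sum_add_base_pow_mul one_lt_two (by omega)]
  omega

theorem stmt7 (n a c : ℕ) (hn : 0 < n) (hc : 0 < c) (hodd : Odd c)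
    (ha0 : 1 ≤ a) (ha : a ≤ 2 ^ n) :
    (s₂ (c * 2 ^ n - a) : ℤ) = s₂ c + n - padicValNat 2 a - s₂ a :=
  stmt7_general n a c hodd ha0 ha
end
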